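/- Let v be a smooth positive function on the 2-sphere S² such that the Hessian satisfies ∇²v + v·δ ≥ 0 (as a symmetric bilinear form, with respect to the round metric δ). Then max_{S²}(|∇v|² + v²) ≤ max_{S²} v², i.e. |∇v|² + v² attains its maximum at a point where ∇v = 0. -/

import Mathlib

open Real

/-- Tangential (spherical) gradient of `v` at `x ∈ S²`, i.e. the gradient of the
restriction of `v` to the unit sphere with respect to the round metric. -/
noncomputable def sphereGrad (v : EuclideanSpace ℝ (Fin 3) → ℝ)
    (x : EuclideanSpace ℝ (Fin 3)) : EuclideanSpace ℝ (Fin 3) :=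
  gradient v x - (inner ℝ (gradient v x) x : ℝ) • x

/-- The covariant Hessian of the restriction of `v` to the unit sphere (round metric),
evaluated on a tangent vector `ξ` at `x`:
`Hess_{S²} v (ξ,ξ) = Hess_{ℝ³} v (ξ,ξ) - ⟨∇v, x⟩ |ξ|²`. -/
noncomputable def sphereHess (v : EuclideanSpace ℝ (Fin 3) → ℝ)
    (x ξ : EuclideanSpace ℝ (Fin 3)) : ℝ :=
  (inner ℝ (fderiv ℝ (gradient v) x ξ) ξ : ℝ) - (inner ℝ (gradient v x) x : ℝ) * ‖ξ‖ ^ 2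

open Set Filter Topology


set_option maxHeartbeats 1000000 in
theorem ode_comp (f f1 f2 : ℝ → ℝ)
    (hf : ∀ t, HasDerivAt f (f1 t) t)
    (hf1 : ∀ t, HasDerivAt f1 (f2 t) t)
    (hpos : 0 < f 0) (hd : 0 ≤ f1 0)
    (hcomp : ∀ t, 0 ≤ f2 t + f t) :
    ∃ t, f1 0 ^ 2 + f 0 ^ 2 ≤ f t ^ 2 := by
  rcases eq_or_lt_of_le hd with h0 | h0
  · exact ⟨0, by rw [← h0]; nlinarith⟩
  set A := Real.sqrt (f1 0 ^ 2 + f 0 ^ 2) with hAdef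
  have hA2 : A ^ 2 = f1 0 ^ 2 + f 0 ^ 2 := Real.sq_sqrt (by positivity)
  have hA : 0 < A := Real.sqrt_pos.2 (by positivity)
  have hfA : f1 0 < A := by
    rw [hAdef]
    rw [Real.lt_sqrt h0.le]
    nlinarith
  set s := f1 0 / A with hsdef
  have hs0 : 0 < s := div_pos h0 hA
  have hs1 : s < 1 := (div_lt_one hA).2 hfA
  set T := Real.arcsin s with hTdef
  have hT0 : 0 < T := Real.arcsin_pos.2 hs0
  have hT2 : T < π / 2 := Real.arcsin_lt_pi_div_two.2 hs1
  set u : ℝ → ℝ := fun t => f t - (f 0 * Real.cos t + f1 0 * Real.sin t) with hudef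
  set u1 : ℝ → ℝ := fun t => f1 t - (f 0 * (-Real.sin t) + f1 0 * Real.cos t) with hu1def
  set u2 : ℝ → ℝ := fun t => f2 t - (f 0 * (-Real.cos t) + f1 0 * (-Real.sin t)) with hu2def
  have hu : ∀ t, HasDerivAt u (u1 t) t := fun t =>
    (hf t).sub (((Real.hasDerivAt_cos t).const_mul (f 0)).add
      ((Real.hasDerivAt_sin t).const_mul (f1 0)))
  have hu1 : ∀ t, HasDerivAt u1 (u2 t) t := fun t =>
    (hf1 t).sub ((((Real.hasDerivAt_sin t).neg).const_mul (f 0)).add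
      ((Real.hasDerivAt_cos t).const_mul (f1 0)))
  have key : ∀ t, 0 ≤ u2 t + u t := by
    intro t
    have := hcomp t
    simp only [hu2def, hudef]
    ring_nf
    ring_nf at this
    linarith
  set w : ℝ → ℝ := fun t => u1 t * Real.sin t - u t * Real.cos t with hwdef
  have hw : ∀ t, HasDerivAt w ((u2 t + u t) * Real.sin t) t := by
    intro t
    have h := ((hu1 t).mul (Real.hasDerivAt_sin t)).sub ((hu t).mul (Real.hasDerivAt_cos t))
    rw [show w = u1 * Real.sin - u * Real.cos from rfl]
    exact h.congr_deriv (by ring)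
  have u0 : u 0 = 0 := by simp [hudef]
  have u10 : u1 0 = 0 := by simp [hu1def]
  have w0 : w 0 = 0 := by simp [hwdef, u0, u10]
  have wmono : MonotoneOn w (Icc 0 T) := by
    refine monotoneOn_of_deriv_nonneg (convex_Icc 0 T)
      (Continuous.continuousOn
        (continuous_iff_continuousAt.2 fun t => (hw t).continuousAt))
      (fun t _ => ((hw t).differentiableAt).differentiableWithinAt) ?_
    intro t ht
    rw [interior_Icc] at ht
    rw [(hw t).deriv]
    have hsin : 0 ≤ Real.sin t := Real.sin_nonneg_of_nonneg_of_le_pi ht.1.le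
      (by linarith [Real.pi_pos, ht.2, hT2])
    exact mul_nonneg (key t) hsin
  have wpos : ∀ t ∈ Icc 0 T, 0 ≤ w t := by
    intro t ht
    have := wmono (left_mem_Icc.2 hT0.le) ht ht.1
    rwa [w0] at this
  set z : ℝ → ℝ := fun t => u t / Real.sin t with hzdef
  have hsinpos : ∀ t ∈ Ioc 0 T, 0 < Real.sin t := by
    intro t ht
    exact Real.sin_pos_of_pos_of_lt_pi ht.1 (by linarith [Real.pi_pos, ht.2, hT2])
  have hz : ∀ t ∈ Ioc 0 T, HasDerivAt z (w t / Real.sin t ^ 2) t := by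
    intro t ht
    have h := (hu t).div (Real.hasDerivAt_sin t) (hsinpos t ht).ne'
    rw [show z = u / Real.sin from rfl]
    exact h
  have zmono : MonotoneOn z (Ioc 0 T) := by
    refine monotoneOn_of_deriv_nonneg (convex_Ioc 0 T)
      (fun t ht => ((hz t ht).continuousAt).continuousWithinAt)
      (fun t ht => by
        rw [interior_Ioc] at ht
        exact ((hz t ⟨ht.1, ht.2.le⟩).differentiableAt).differentiableWithinAt) ?_
    intro t ht
    rw [interior_Ioc] at ht
    have ht' : t ∈ Ioc 0 T := ⟨ht.1, ht.2.le⟩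
    rw [(hz t ht').deriv]
    exact div_nonneg (wpos t ⟨ht.1.le, ht.2.le⟩) (by positivity)
  have ztend : Tendsto z (𝓝[>] (0:ℝ)) (𝓝 0) := by
    have h1 : Tendsto (fun t => u t / t) (𝓝[≠] (0:ℝ)) (𝓝 0) := by
      have := hasDerivAt_iff_tendsto_slope.1 (hu 0)
      rw [u10] at this
      refine this.congr (fun t => ?_)
      simp [slope_def_field, u0]
    have h2 : Tendsto (fun t => Real.sin t / t) (𝓝[≠] (0:ℝ)) (𝓝 1) := by
      have := hasDerivAt_iff_tendsto_slope.1 (Real.hasDerivAt_sin 0)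
      simp only [Real.cos_zero] at this
      refine this.congr (fun t => ?_)
      simp [slope_def_field]
    have h3 : Tendsto (fun t => (u t / t) * (Real.sin t / t)⁻¹) (𝓝[≠] (0:ℝ)) (𝓝 0) := by
      have := h1.mul (h2.inv₀ one_ne_zero)
      simpa using this
    have h4 : Tendsto z (𝓝[≠] (0:ℝ)) (𝓝 0) := by
      refine h3.congr' ?_
      filter_upwards [self_mem_nhdsWithin] with t ht
      simp only [hzdef, Set.mem_compl_iff, Set.mem_singleton_iff] at *
      rw [inv_div, div_mul_div_comm, mul_comm (u t) t]
      exact mul_div_mul_left _ _ ht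
    exact h4.mono_left (nhdsWithin_mono _ (fun t ht => ne_of_gt ht))
  have zT : 0 ≤ z T := by
    apply le_of_tendsto ztend
    have hIoo : Ioo (0:ℝ) T ∈ 𝓝[>] (0:ℝ) := Ioo_mem_nhdsGT_of_mem (left_mem_Ico.2 hT0)
    filter_upwards [hIoo] with t ht
    exact zmono ⟨ht.1, ht.2.le⟩ (right_mem_Ioc.2 hT0) ht.2.le
  have hsT : 0 < Real.sin T := hsinpos T (right_mem_Ioc.2 hT0)
  have uT : 0 ≤ u T := by
    have : u T = z T * Real.sin T := by
      simp only [hzdef]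
      field_simp
    rw [this]
    exact mul_nonneg zT hsT.le
  have hsinT : Real.sin T = s := Real.sin_arcsin (by linarith) hs1.le
  have hcosT : Real.cos T = f 0 / A := by
    rw [hTdef, Real.cos_arcsin]
    rw [show 1 - s ^ 2 = (f 0 / A) ^ 2 by
      rw [hsdef]; field_simp; nlinarith]
    exact Real.sqrt_sq (by positivity)
  have hfT : A ≤ f T := by
    have h := uT
    simp only [hudef] at h
    rw [hsinT, hcosT, hsdef] at h
    have : f 0 * (f 0 / A) + f1 0 * (f1 0 / A) = A := by
      field_simp
      nlinarith
    linarith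
  exact ⟨T, by nlinarith⟩

set_option maxHeartbeats 1000000 in
/-- if `v > 0` is smooth on `S²` and `∇²v + v·δ ≥ 0` on tangent vectors,
then `max (|∇v|² + v²) ≤ max v²`. -/
theorem stmt0 (v : EuclideanSpace ℝ (Fin 3) → ℝ) (hv : ContDiff ℝ (⊤ : ℕ∞) v)
    (hpos : ∀ x ∈ Metric.sphere (0 : EuclideanSpace ℝ (Fin 3)) 1, 0 < v x)
    (hconv : ∀ x ∈ Metric.sphere (0 : EuclideanSpace ℝ (Fin 3)) 1,
      ∀ ξ : EuclideanSpace ℝ (Fin 3), (inner ℝ ξ x : ℝ) = 0 →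
        0 ≤ sphereHess v x ξ + v x * ‖ξ‖ ^ 2) :
    ∀ x ∈ Metric.sphere (0 : EuclideanSpace ℝ (Fin 3)) 1,
      ‖sphereGrad v x‖ ^ 2 + (v x) ^ 2 ≤
        sSup ((fun y => (v y) ^ 2) '' Metric.sphere (0 : EuclideanSpace ℝ (Fin 3)) 1) := by
  intro x hx
  have hbdd : BddAbove ((fun y => (v y) ^ 2) '' Metric.sphere (0 : EuclideanSpace ℝ (Fin 3)) 1) :=
    (isCompact_sphere 0 1).bddAbove_image ((hv.continuous.pow 2).continuousOn)
  have hx1 : ‖x‖ = 1 := by simpa using mem_sphere_zero_iff_norm.1 hx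
  have hvdiff : Differentiable ℝ v := hv.differentiable (by simp)
  have hgrad_smooth : ContDiff ℝ (⊤ : ℕ∞) (gradient v) := by
    have h1 : ContDiff ℝ (⊤ : ℕ∞) (fderiv ℝ v) := hv.fderiv_right (by simp)
    exact ((InnerProductSpace.toDual ℝ (EuclideanSpace ℝ (Fin 3))).symm.contDiff).comp h1
  by_cases hg0 : sphereGrad v x = 0
  · rw [hg0]
    simpa using le_csSup hbdd ⟨x, hx, rfl⟩
  set g := sphereGrad v x with hgdef
  have hgx : (inner ℝ g x : ℝ) = 0 := by
    simp only [hgdef, sphereGrad, inner_sub_left, real_inner_smul_left,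
      real_inner_self_eq_norm_sq, hx1]
    ring
  set e : EuclideanSpace ℝ (Fin 3) := ‖g‖⁻¹ • g with hedef
  have hgn : (0:ℝ) < ‖g‖ := norm_pos_iff.2 hg0
  have hee : (inner ℝ e e : ℝ) = 1 := by
    rw [hedef, real_inner_smul_left, real_inner_smul_right, real_inner_self_eq_norm_sq]
    field_simp
  have hex : (inner ℝ e x : ℝ) = 0 := by
    rw [hedef, real_inner_smul_left, hgx, mul_zero]
  have hxe : (inner ℝ x e : ℝ) = 0 := by rw [real_inner_comm]; exact hex
  have hxx : (inner ℝ x x : ℝ) = 1 := by rw [real_inner_self_eq_norm_sq, hx1]; norm_num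
  have hIP : ∀ a b c d : ℝ,
      (inner ℝ (a • x + b • e) (c • x + d • e) : ℝ) = a * c + b * d := by
    intro a b c d
    simp only [inner_add_left, inner_add_right, real_inner_smul_left, real_inner_smul_right,
      hxx, hee, hex, hxe]
    ring
  set γ : ℝ → EuclideanSpace ℝ (Fin 3) := fun t => Real.cos t • x + Real.sin t • e with hγdef
  set γ' : ℝ → EuclideanSpace ℝ (Fin 3) :=
    fun t => (-Real.sin t) • x + Real.cos t • e with hγ'def
  have hγmem : ∀ t, γ t ∈ Metric.sphere (0 : EuclideanSpace ℝ (Fin 3)) 1 := by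
    intro t
    have h2 : ‖γ t‖ ^ 2 = 1 := by
      rw [← real_inner_self_eq_norm_sq, hγdef]
      simp only []
      rw [hIP]
      nlinarith [Real.sin_sq_add_cos_sq t]
    rw [mem_sphere_zero_iff_norm, ← Real.sqrt_sq (norm_nonneg (γ t)), h2, Real.sqrt_one]
  have hγ'norm : ∀ t, ‖γ' t‖ = 1 := by
    intro t
    have h2 : ‖γ' t‖ ^ 2 = 1 := by
      rw [← real_inner_self_eq_norm_sq, hγ'def]
      simp only []
      rw [hIP]
      nlinarith [Real.sin_sq_add_cos_sq t]
    rw [← Real.sqrt_sq (norm_nonneg (γ' t)), h2, Real.sqrt_one]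
  have hγ'γ : ∀ t, (inner ℝ (γ' t) (γ t) : ℝ) = 0 := by
    intro t
    rw [hγ'def, hγdef]
    simp only []
    rw [hIP]
    ring
  have hγd : ∀ t, HasDerivAt γ (γ' t) t := fun t =>
    ((Real.hasDerivAt_cos t).smul_const x).add ((Real.hasDerivAt_sin t).smul_const e)
  have hγ'd : ∀ t, HasDerivAt γ' (-(γ t)) t := by
    intro t
    have h := (((Real.hasDerivAt_sin t).neg).smul_const x).add
      (((Real.hasDerivAt_cos t)).smul_const e)
    exact h.congr_deriv (by simp only [hγdef, neg_add, neg_smul])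
  set f : ℝ → ℝ := fun t => v (γ t) with hfdef
  set f1 : ℝ → ℝ := fun t => (inner ℝ (gradient v (γ t)) (γ' t) : ℝ) with hf1def
  set f2 : ℝ → ℝ := fun t => (inner ℝ (fderiv ℝ (gradient v) (γ t) (γ' t)) (γ' t) : ℝ)
    - (inner ℝ (gradient v (γ t)) (γ t) : ℝ) with hf2def
  have hfd : ∀ t, HasDerivAt f (f1 t) t := by
    intro t
    have h := ((hvdiff (γ t)).hasGradientAt.hasFDerivAt).comp_hasDerivAt t (hγd t)
    exact h
  have hGd : ∀ t, HasDerivAt (fun t => gradient v (γ t))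
      (fderiv ℝ (gradient v) (γ t) (γ' t)) t := fun t =>
    ((hgrad_smooth.differentiable (by simp) (γ t)).hasFDerivAt).comp_hasDerivAt t (hγd t)
  have hf1d : ∀ t, HasDerivAt f1 (f2 t) t := by
    intro t
    have h := HasDerivAt.inner ℝ (hGd t) (hγ'd t)
    refine h.congr_deriv ?_
    rw [hf2def]
    simp only [inner_neg_right]
    ring
  have hcomp : ∀ t, 0 ≤ f2 t + f t := by
    intro t
    have h := hconv (γ t) (hγmem t) (γ' t) (hγ'γ t)
    rw [sphereHess, hγ'norm t] at h
    simp only [one_pow, mul_one] at h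
    simp only [hf2def, hfdef]
    linarith
  have hf0 : f 0 = v x := by
    simp [hfdef, hγdef]
  have hf10 : f1 0 = ‖g‖ := by
    have hγ'0 : γ' 0 = e := by simp [hγ'def]
    have hgrx : gradient v x = g + (inner ℝ (gradient v x) x : ℝ) • x := by
      rw [hgdef, sphereGrad]; abel
    rw [hf1def]
    simp only []
    rw [show γ (0:ℝ) = x by simp [hγdef], hγ'0, hgrx]
    rw [inner_add_left, real_inner_smul_left, hxe]
    rw [hedef, real_inner_smul_right, real_inner_self_eq_norm_sq]
    field_simp
    ring
  obtain ⟨t, ht⟩ := ode_comp f f1 f2 hfd hf1d (by rw [hf0]; exact hpos x hx)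
    (by rw [hf10]; positivity) hcomp
  rw [hf10, hf0] at ht
  calc ‖g‖ ^ 2 + v x ^ 2 ≤ f t ^ 2 := ht
    _ ≤ _ := le_csSup hbdd ⟨γ t, hγmem t, rfl⟩
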